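/- arXiv:2007.07813 — 4 statements merged into one kernel-verified Lean document; each statement's English description precedes it below -/
import Mathlib

section
/- Let L > 0, n ≥ 1, and x, y ∈ (ℤ^d)^n. Suppose the union of cubes C_L(y_1) ∪ ... ∪ C_L(y_n) (each C_L(y_j) being the closed sup-norm ball of radius L centered at y_j in ℝ^d) decomposes into maximal L-clusters Γ_1, ..., Γ_M (maximal connected components of the union), and suppose every cluster Γ_k, k ∈ {1,...,M}, intersects C_L(x_1) ∪ ... ∪ C_L(x_n). Then every y_j lies in one of the cubes C_{2nL}(x_i) for some i ∈ {1,...,n}. -/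
open Metric Set

/-- Along a walk in the intersection graph of cubes of radius `L`, centers drift by at
most `2 * L` per step. -/
lemma walk_dist_bound {n : ℕ} {α : Type*} [PseudoMetricSpace α] (c : Fin n → α) (L : ℝ)
    (G : SimpleGraph (Fin n))
    (hG : ∀ a b, G.Adj a b → dist (c a) (c b) ≤ 2 * L) :
    ∀ {a b : Fin n} (w : G.Walk a b), dist (c a) (c b) ≤ 2 * L * w.length := by
  intro a b w
  induction w with
  | nil => simp
  | cons h w ih =>
    calc dist (c _) (c _) ≤ dist (c _) (c _) + dist (c _) (c _) := dist_triangle _ _ _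
    _ ≤ 2 * L + 2 * L * w.length := add_le_add (hG _ _ h) ih
    _ = 2 * L * (w.length + 1) := by ring
    _ = 2 * L * (SimpleGraph.Walk.cons h w).length := by
        rw [SimpleGraph.Walk.length_cons]; push_cast; ring

/-- If every maximal `L`-cluster (connected component) of the union of the
cubes `C_L(y_j)` intersects the union of the cubes `C_L(x_i)`, then every `y_j` lies in
one of the cubes `C_{2nL}(x_i)`. -/
theorem cluster_intersection_implies_close
    (d n : ℕ) (hn : 1 ≤ n) (L : ℝ) (hL : 0 < L)
    (x y : Fin n → Fin d → ℤ)
    (xR : Fin n → Fin d → ℝ) (yR : Fin n → Fin d → ℝ)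
    (hxR : ∀ i k, xR i k = (x i k : ℝ)) (hyR : ∀ j k, yR j k = (y j k : ℝ))
    (Y : Set (Fin d → ℝ)) (hY : Y = ⋃ j, closedBall (yR j) L)
    (X : Set (Fin d → ℝ)) (hX : X = ⋃ i, closedBall (xR i) L)
    (hcluster : ∀ j, (connectedComponentIn Y (yR j) ∩ X).Nonempty) :
    ∀ j, ∃ i, yR j ∈ closedBall (xR i) (2 * n * L) := by
  classical
  intro j
  -- the intersection graph of the cubes around the `y`'s
  set G : SimpleGraph (Fin n) :=
    { Adj := fun a b => a ≠ b ∧ (closedBall (yR a) L ∩ closedBall (yR b) L).Nonempty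
      symm := ⟨by
        rintro a b ⟨hab, w, hw1, hw2⟩
        exact ⟨hab.symm, w, hw2, hw1⟩⟩
      loopless := ⟨fun a h => h.1 rfl⟩ } with hG
  have hadj_dist : ∀ a b, G.Adj a b → dist (yR a) (yR b) ≤ 2 * L := by
    rintro a b ⟨-, w, hw1, hw2⟩
    calc dist (yR a) (yR b) ≤ dist (yR a) w + dist w (yR b) := dist_triangle _ _ _
    _ ≤ L + L := add_le_add (mem_closedBall'.1 hw1) (mem_closedBall.1 hw2)
    _ = 2 * L := by ring
  have hself : ∀ a, yR a ∈ closedBall (yR a) L := fun a => by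
    simpa using hL.le
  have hjY : yR j ∈ Y := by
    rw [hY]; exact mem_iUnion.2 ⟨j, hself j⟩
  set C := connectedComponentIn Y (yR j) with hC
  obtain ⟨z, hzC, hzX⟩ := hcluster j
  obtain ⟨i, hzi⟩ := mem_iUnion.1 (hX ▸ hzX)
  -- separation argument: z lies in a cube whose index is reachable from j in G
  set A : Set (Fin d → ℝ) := ⋃ a ∈ {a | G.Reachable j a}, closedBall (yR a) L with hA
  set B : Set (Fin d → ℝ) := ⋃ a ∈ {a | ¬ G.Reachable j a}, closedBall (yR a) L with hB
  have hAclosed : IsClosed A :=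
    Set.Finite.isClosed_biUnion (Set.toFinite _) (fun _ _ => isClosed_closedBall)
  have hBclosed : IsClosed B :=
    Set.Finite.isClosed_biUnion (Set.toFinite _) (fun _ _ => isClosed_closedBall)
  have hABdisj : A ∩ B = ∅ := by
    ext w
    simp only [hA, hB, mem_inter_iff, mem_iUnion, mem_empty_iff_false, iff_false]
    rintro ⟨⟨a, ha, hwa⟩, ⟨b, hb, hwb⟩⟩
    apply hb
    rcases eq_or_ne a b with rfl | hab
    · exact ha
    · exact ha.trans (SimpleGraph.Adj.reachable ⟨hab, w, hwa, hwb⟩)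
  have hCY : C ⊆ Y := connectedComponentIn_subset _ _
  have hCAB : C ⊆ A ∪ B := by
    intro w hw
    obtain ⟨a, hwa⟩ := mem_iUnion.1 (hY ▸ hCY hw)
    by_cases h : G.Reachable j a
    · exact Or.inl (mem_biUnion h hwa)
    · exact Or.inr (mem_biUnion h hwa)
  have hzA : z ∈ A := by
    by_contra hzA
    have hzB : z ∈ B := (hCAB hzC).resolve_left hzA
    have hpre : IsPreconnected C := isPreconnected_connectedComponentIn
    have hjA : yR j ∈ A := mem_biUnion (SimpleGraph.Reachable.refl j) (hself j)
    obtain ⟨w, hwC, hwB, hwA⟩ :=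
      hpre Bᶜ Aᶜ hBclosed.isOpen_compl hAclosed.isOpen_compl
        (fun w hw => by
          rcases hCAB hw with h | h
          · exact Or.inl (fun hB' => (eq_empty_iff_forall_notMem.1 hABdisj w) ⟨h, hB'⟩)
          · exact Or.inr (fun hA' => (eq_empty_iff_forall_notMem.1 hABdisj w) ⟨hA', h⟩))
        ⟨yR j, mem_connectedComponentIn hjY,
          fun hB' => (eq_empty_iff_forall_notMem.1 hABdisj (yR j)) ⟨hjA, hB'⟩⟩
        ⟨z, hzC, hzA⟩
    rcases hCAB hwC with h | h
    · exact hwA h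
    · exact hwB h
  obtain ⟨a, hreach, hza⟩ : ∃ a, G.Reachable j a ∧ z ∈ closedBall (yR a) L := by
    simpa only [hA, mem_iUnion, exists_prop, mem_setOf_eq] using hzA
  -- take a path from j to a; it has length at most n - 1
  obtain ⟨wk⟩ := hreach
  set p := wk.toPath with hp
  have hplen : (p : G.Walk j a).length < n := by
    simpa using p.property.length_lt
  have hdistja : dist (yR j) (yR a) ≤ 2 * L * (n - 1) := by
    calc dist (yR j) (yR a) ≤ 2 * L * (p : G.Walk j a).length :=
          walk_dist_bound yR L G hadj_dist _
    _ ≤ 2 * L * (n - 1) := by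
        apply mul_le_mul_of_nonneg_left _ (by linarith)
        have h' : ((p : G.Walk j a).length : ℝ) + 1 ≤ n := by exact_mod_cast hplen
        linarith
  refine ⟨i, ?_⟩
  rw [mem_closedBall]
  have h1 : dist z (yR a) ≤ L := by rwa [← mem_closedBall]
  have h2 : dist z (xR i) ≤ L := by rwa [← mem_closedBall]
  have hn1 : (1 : ℝ) ≤ n := by exact_mod_cast hn
  calc dist (yR j) (xR i) ≤ dist (yR j) (yR a) + dist (yR a) z + dist z (xR i) :=
        dist_triangle4 _ _ _ _
  _ ≤ 2 * L * (n - 1) + L + L := by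
      refine add_le_add (add_le_add hdistja ?_) h2
      rwa [dist_comm]
  _ = 2 * n * L := by ring
end

section
/- Let n ≥ 1, L ≥ 2r_0 > 0, and let x = (x_1,...,x_n), y = (y_1,...,y_n) ∈ (ℝ^d)^n with |x - y|_∞ ≥ 7nL. Assume both configurations are fully interactive, i.e. max_{i≠j} |x_i - x_j|_∞ ≤ n(2L + r_0) and max_{i≠j} |y_i - y_j|_∞ ≤ n(2L + r_0). Then the projections are disjoint: (∪_{i=1}^n C_L(x_i)) ∩ (∪_{j=1}^n C_L(y_j)) = ∅; in fact min_{i,j} dist(C_L(x_i), C_L(y_j)) ≥ 2(n-1)L. -/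
open Metric Set

/-!
Pick a coordinate `i₀` realising the sup-distance, so `|x_{i₀} - y_{i₀}| ≥ 7nL`. Moving inside
each fully interactive configuration costs at most `n(2L + r₀) ≤ 5nL/2`, so every `x_i` and
`y_j` are at distance at least `7nL - 5nL = 2nL`, and the cubes of radius `L` around them are at
distance at least `2nL - 2L`. For `n ≥ 2` this is positive; for `n = 1` there is only `i₀`.
-/

lemma exists_dist_pi_eq_dist_apply {β : Type*} [Fintype β] [Nonempty β] {X : β → Type*}
    [∀ b, PseudoMetricSpace (X b)] (f g : ∀ b, X b) : ∃ b, dist f g = dist (f b) (g b) := by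
  obtain ⟨b, -, hb⟩ :=
    Finset.exists_mem_eq_sup Finset.univ Finset.univ_nonempty fun b => nndist (f b) (g b)
  exact ⟨b, by rw [dist_pi_def, hb, coe_nndist]⟩

lemma dist_sub_add_le_dist_of_mem_closedBall {X : Type*} [PseudoMetricSpace X] {a b p q : X}
    {r s : ℝ} (hp : p ∈ closedBall a r) (hq : q ∈ closedBall b s) :
    dist a b - (r + s) ≤ dist p q := by
  rw [mem_closedBall] at hp hq
  linarith [dist_triangle4 a p q b, dist_comm a p]

lemma dist_apply_sub_le_dist_apply {ι X : Type*} [PseudoMetricSpace X] {x y : ι → X} {D : ℝ}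
    (hx : ∀ i j, dist (x i) (x j) ≤ D) (hy : ∀ i j, dist (y i) (y j) ≤ D) (i₀ i j : ι) :
    dist (x i₀) (y i₀) - 2 * D ≤ dist (x i) (y j) := by
  linarith [dist_triangle4 (x i₀) (x i) (y j) (y i₀), hx i₀ i, hy j i₀]

/-- Two fully interactive configurations at sup-distance at least `7nL`
have disjoint projections; in fact the cubes `C_L(x_i)` and `C_L(y_j)` are at pairwise
distance at least `2(n-1)L`. -/
theorem fully_interactive_disjoint_projections
    (d n : ℕ) (hn : 1 ≤ n) (r0 L : ℝ) (hr0 : 0 < r0) (hL : 2 * r0 ≤ L)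
    (x y : Fin n → Fin d → ℝ)
    (hdist : 7 * n * L ≤ dist x y)
    (hxFI : ∀ i j, dist (x i) (x j) ≤ n * (2 * L + r0))
    (hyFI : ∀ i j, dist (y i) (y j) ≤ n * (2 * L + r0)) :
    ((⋃ i, closedBall (x i) L) ∩ ⋃ j, closedBall (y j) L) = ∅ ∧
      ∀ i j, ∀ p ∈ closedBall (x i) L, ∀ q ∈ closedBall (y j) L,
        2 * ((n : ℝ) - 1) * L ≤ dist p q := by
  have hL0 : 0 < L := by linarith
  have : Nonempty (Fin n) := ⟨⟨0, hn⟩⟩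
  obtain ⟨i₀, hi₀⟩ := exists_dist_pi_eq_dist_apply x y
  have hsep (i j : Fin n) : 2 * n * L ≤ dist (x i) (y j) := by
    have := dist_apply_sub_le_dist_apply hxFI hyFI i₀ i j
    nlinarith [mul_le_mul_of_nonneg_left hL (Nat.cast_nonneg (α := ℝ) n)]
  have hsep_strict (i j : Fin n) : L + L < dist (x i) (y j) := by
    obtain rfl | hn2 := hn.eq_or_lt
    · rw [Subsingleton.elim i i₀, Subsingleton.elim j i₀, ← hi₀]
      push_cast at hdist
      linarith
    · have : (2 : ℝ) ≤ n := by exact_mod_cast hn2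
      nlinarith [hsep i j]
  refine ⟨disjoint_iff_inter_eq_empty.mp ?_, fun i j p hp q hq => ?_⟩
  · simp only [disjoint_iUnion_left, disjoint_iUnion_right]
    exact fun j i => closedBall_disjoint_closedBall (hsep_strict i j)
  · linarith [dist_sub_add_le_dist_of_mem_closedBall hp hq, hsep i j]
end

section
/- Let n ≥ 1, L > 0, and y = (y_1,...,y_n) ∈ (ℝ^d)^n. Set R(y) = max_{1≤i,j≤n} |y_i - y_j|_∞ + 5nL. Then for any x = (x_1,...,x_n) ∈ (ℝ^d)^n with |x - y|_∞ ≥ R(y), there exists a nonempty subset J ⊆ {1,...,n} such that the union Λ := ∪_{i∈J} C_L(x_i) is a maximal connected component of ∪_{i=1}^n C_L(x_i) and Λ is disjoint from ∪_{j=1}^n C_L(y_j). -/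
/-!
Pick a coordinate `i₀` realising the sup-distance `|x - y|_∞ ≥ R` and let `Λ` be the connected
component of `⋃ C_L(x_i)` through `x i₀`. The cubes are connected, so `Λ` is the union of the
cubes it contains. Each point of `Λ` lies in a cube joined to `C_L(x i₀)` by a chain of
pairwise-intersecting cubes, of length `< n` once the chain is a path, so `Λ` stays within
`(2n - 1)L` of `x i₀`. A point of `Λ` in some `C_L(y_j)` would then put `y i₀` within
`2nL + diam y < R` of `x i₀`.
-/

open Metric Set

section Pi

variable {β : Type*} {X : β → Type*} [Fintype β] [∀ b, PseudoMetricSpace (X b)]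

lemma exists_dist_pi_eq [Nonempty β] (f g : ∀ b, X b) : ∃ b, dist f g = dist (f b) (g b) := by
  obtain ⟨b, -, hb⟩ := Finset.exists_mem_eq_sup Finset.univ Finset.univ_nonempty
    fun b => nndist (f b) (g b)
  exact ⟨b, by rw [dist_pi_def, hb]; rfl⟩

end Pi

lemma dist_le_iSup_iSup_dist {ι X : Type*} [Finite ι] [PseudoMetricSpace X] (y : ι → X) (i j : ι) :
    dist (y i) (y j) ≤ ⨆ i, ⨆ j, dist (y i) (y j) :=
  (le_ciSup (finite_range _).bddAbove j).trans
    (le_ciSup (f := fun i => ⨆ j, dist (y i) (y j)) (finite_range _).bddAbove i)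

def intersectionGraph {ι X : Type*} (s : ι → Set X) : SimpleGraph ι where
  Adj i j := i ≠ j ∧ (s i ∩ s j).Nonempty
  symm := ⟨fun _ _ h => ⟨h.1.symm, by rw [inter_comm]; exact h.2⟩⟩
  loopless := ⟨fun _ h => h.1 rfl⟩

lemma intersectionGraph_adj {ι X : Type*} {s : ι → Set X} {i j : ι} :
    (intersectionGraph s).Adj i j ↔ i ≠ j ∧ (s i ∩ s j).Nonempty := Iff.rfl

section Components

variable {ι X : Type*} [TopologicalSpace X] {s : ι → Set X}

lemma connectedComponentIn_iUnion_eq_biUnion (hs : ∀ i, IsPreconnected (s i)) (z : X) :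
    connectedComponentIn (⋃ i, s i) z =
      ⋃ i ∈ {i | s i ⊆ connectedComponentIn (⋃ i, s i) z}, s i := by
  refine Subset.antisymm (fun p hp => ?_) (iUnion₂_subset fun i hi => hi)
  obtain ⟨i, hpi⟩ := mem_iUnion.1 (connectedComponentIn_subset _ _ hp)
  refine mem_iUnion₂.2 ⟨i, ?_, hpi⟩
  rw [mem_ofPred_eq, connectedComponentIn_eq hp]
  exact (hs i).subset_connectedComponentIn hpi (subset_iUnion s i)

lemma connectedComponentIn_iUnion_subset_biUnion_reachable [Finite ι]
    (hs : ∀ i, IsClosed (s i)) {i₀ : ι} {z : X} (hz : z ∈ s i₀) :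
    connectedComponentIn (⋃ i, s i) z ⊆ ⋃ i ∈ {i | (intersectionGraph s).Reachable i₀ i}, s i := by
  set A := {i | (intersectionGraph s).Reachable i₀ i}
  have hcover : (⋃ i, s i) ⊆ (⋃ i ∈ A, s i) ∪ ⋃ i ∈ Aᶜ, s i := by
    refine iUnion_subset fun i => ?_
    by_cases hi : i ∈ A
    · exact subset_union_of_subset_left (subset_biUnion_of_mem hi) _
    · exact subset_union_of_subset_right (subset_biUnion_of_mem (show i ∈ Aᶜ from hi)) _
  have hdisj : Disjoint (⋃ i ∈ A, s i) (⋃ i ∈ Aᶜ, s i) := by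
    simp only [disjoint_iUnion_left, disjoint_iUnion_right]
    intro j hj i hi
    refine disjoint_iff_inter_eq_empty.2 (not_nonempty_iff_eq_empty.1 fun hij => hj ?_)
    rcases eq_or_ne i j with rfl | hne
    · exact hi
    · exact hi.trans (SimpleGraph.Adj.reachable ⟨hne, hij⟩)
  have hclosed : ∀ B : Set ι, IsClosed (⋃ i ∈ B, s i) :=
    fun B => B.toFinite.isClosed_biUnion fun i _ => hs i
  rcases isPreconnected_iff_subset_of_disjoint_closed.1 isPreconnected_connectedComponentIn _ _
    (hclosed A) (hclosed Aᶜ) ((connectedComponentIn_subset _ _).trans hcover)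
    (by rw [hdisj.inter_eq, inter_empty]) with h | h
  · exact h
  · have hzA : z ∈ ⋃ i ∈ A, s i := mem_biUnion (SimpleGraph.Reachable.refl i₀) hz
    exact absurd (h (mem_connectedComponentIn (mem_iUnion_of_mem i₀ hz)))
      (disjoint_left.1 hdisj hzA)

end Components

section Balls

variable {ι X : Type*} [PseudoMetricSpace X] {c : ι → X} {L : ℝ}

lemma dist_le_of_walk_intersectionGraph_closedBall {i j : ι}
    (p : (intersectionGraph fun i => closedBall (c i) L).Walk i j) :
    dist (c i) (c j) ≤ 2 * L * p.length := by
  induction p with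
  | nil => simp
  | @cons a b _ hab p ih =>
    obtain ⟨-, q, hqa, hqb⟩ := intersectionGraph_adj.1 hab
    calc dist (c a) (c _) ≤ dist (c a) q + dist q (c b) + dist (c b) (c _) :=
          dist_triangle4 _ _ _ _
      _ ≤ L + L + 2 * L * p.length := by
          gcongr
          · exact mem_closedBall'.1 hqa
          · exact mem_closedBall.1 hqb
      _ = 2 * L * (p.cons hab).length := by
          rw [SimpleGraph.Walk.length_cons]; push_cast; ring

lemma dist_le_of_reachable_intersectionGraph_closedBall [Fintype ι] (hL : 0 ≤ L) {i j : ι}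
    (h : (intersectionGraph fun i => closedBall (c i) L).Reachable i j) :
    dist (c i) (c j) ≤ 2 * L * (Fintype.card ι - 1) := by
  obtain ⟨p, hp⟩ := h.exists_isPath
  have hlen : (p.length : ℝ) ≤ Fintype.card ι - 1 := by
    rw [le_sub_iff_add_le]
    exact_mod_cast hp.length_lt
  calc dist (c i) (c j) ≤ 2 * L * p.length := dist_le_of_walk_intersectionGraph_closedBall p
    _ ≤ 2 * L * (Fintype.card ι - 1) := by gcongr

lemma dist_le_of_mem_connectedComponentIn_iUnion_closedBall [Fintype ι] (hL : 0 ≤ L)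
    (i₀ : ι) {p : X} (hp : p ∈ connectedComponentIn (⋃ i, closedBall (c i) L) (c i₀)) :
    dist p (c i₀) ≤ (2 * Fintype.card ι - 1) * L := by
  obtain ⟨k, hk, hpk⟩ := mem_iUnion₂.1 <| connectedComponentIn_iUnion_subset_biUnion_reachable
    (fun i => isClosed_closedBall) (mem_closedBall_self hL) hp
  calc dist p (c i₀) ≤ dist p (c k) + dist (c k) (c i₀) := dist_triangle _ _ _
    _ ≤ L + 2 * L * (Fintype.card ι - 1) := by
        gcongr
        · exact mem_closedBall.1 hpk
        · rw [dist_comm]; exact dist_le_of_reachable_intersectionGraph_closedBall hL hk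
    _ = (2 * Fintype.card ι - 1) * L := by ring

end Balls

/-- If `|x - y|_∞ ≥ R(y) = diam{y_1,...,y_n} + 5nL`, then some maximal
connected component of the union of the cubes `C_L(x_i)` (a union over a nonempty index
set `J`) is disjoint from the union of the cubes `C_L(y_j)`. -/
theorem separable_component_exists
    (d n : ℕ) (hn : 1 ≤ n) (L : ℝ) (hL : 0 < L)
    (x y : Fin n → Fin d → ℝ) (R : ℝ)
    (hR : R = (⨆ i, ⨆ j, dist (y i) (y j)) + 5 * n * L)
    (hxy : R ≤ dist x y) :
    ∃ J : Set (Fin n), J.Nonempty ∧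
      (∃ z ∈ (⋃ i ∈ J, closedBall (x i) L),
        (⋃ i ∈ J, closedBall (x i) L) =
          connectedComponentIn (⋃ i, closedBall (x i) L) z) ∧
      ((⋃ i ∈ J, closedBall (x i) L) ∩ ⋃ j, closedBall (y j) L) = ∅ := by
  have : Nonempty (Fin n) := ⟨⟨0, hn⟩⟩
  obtain ⟨i₀, hi₀⟩ := exists_dist_pi_eq x y
  set Λ := connectedComponentIn (⋃ i, closedBall (x i) L) (x i₀)
  have hcube_conn : ∀ i, IsPreconnected (closedBall (x i) L) :=
    fun i => (convex_closedBall _ _).isPreconnected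
  have hΛ := connectedComponentIn_iUnion_eq_biUnion hcube_conn (x i₀)
  have hi₀J : closedBall (x i₀) L ⊆ Λ := (hcube_conn i₀).subset_connectedComponentIn
    (mem_closedBall_self hL.le) (subset_iUnion (fun i => closedBall (x i) L) i₀)
  refine ⟨_, ⟨i₀, hi₀J⟩, ⟨x i₀, hΛ ▸ hi₀J (mem_closedBall_self hL.le), hΛ.symm⟩, ?_⟩
  rw [← hΛ, eq_empty_iff_forall_notMem]
  rintro p ⟨hpΛ, hpy⟩
  obtain ⟨j, hpj⟩ := mem_iUnion.1 hpy
  have hn' : (1 : ℝ) ≤ n := by exact_mod_cast hn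
  have hclose : dist (x i₀) (y i₀) < R := calc
    dist (x i₀) (y i₀) ≤ dist p (x i₀) + dist p (y j) + dist (y j) (y i₀) := by
      rw [dist_comm p (x i₀)]; exact dist_triangle4 _ _ _ _
    _ ≤ (2 * n - 1) * L + L + ⨆ i, ⨆ j, dist (y i) (y j) := by
      gcongr
      · simpa using dist_le_of_mem_connectedComponentIn_iUnion_closedBall hL.le i₀ hpΛ
      · exact mem_closedBall.1 hpj
      · exact dist_le_iSup_iSup_dist y j i₀
    _ < R := by rw [hR]; nlinarith
  linarith
end

section
/- Let ψ: ℝ^D → ℂ be polynomially bounded, i.e. ‖1_{C_1(x)} ψ‖ ≤ C(1 + |x|_∞)^t for all x ∈ ℝ^D and some constants C, t > 0. Suppose there are constants m, ρ, ρ' ∈ (0,1), m > 0, and a sequence of scales L_k → ∞ such that for all k large and all x with |x − x_0|_∞ ≥ b_k L_k/(1−ρ) one has ‖1_{C_1(x)} ψ‖ ≤ (C' 3^{Nd})^{3ρ|x−x_0|/L_k} e^{−3mρ|x−x_0|} · C(1 + |x_0| + bL_{k+1})^t L_{k+1}^{Nd}, where L_{k+1} ≤ 2L_k^{3/2} and b_k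 ≤ B. Then for every ρ' ∈ (0,1) there exists R_0 such that ‖1_{C_1(x)} ψ‖ ≤ e^{−ρρ' m |x−x_0|} whenever |x − x_0|_∞ ≥ R_0. -/
open Filter Real

/-!
Fix one scale `L k` so large that `log (C' 3^Nd) ≤ m L k / 3`. At that scale the subexponential
prefactor `(C' 3^Nd)^(3ρr / L k)` is at most `e^{mρr}`, and the polynomial factor, a constant once
`k` is fixed, is at most `e^{mρr}` for large `r`. Both are absorbed by `e^{-3mρr}`, leaving
`e^{-mρr} ≤ e^{-ρρ'mr}`.
-/

theorem rpow_div_le_exp_mul_of_log_le {c L s a : ℝ} (hc : 0 < c) (hL : 0 < L) (hs : 0 ≤ s)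
    (h : log c ≤ a * L) : c ^ (s / L) ≤ exp (a * s) := by
  rw [rpow_def_of_pos hc, exp_le_exp, ← mul_div_assoc, div_le_iff₀ hL]
  nlinarith

theorem le_exp_mul_of_div_le {A a r : ℝ} (ha : 0 < a) (h : A / a ≤ r) : A ≤ exp (a * r) := by
  rw [div_le_iff₀ ha] at h
  linarith [add_one_le_exp (a * r)]

theorem subexponential_to_exponential_decay_general
    (D Nd : ℕ) (x₀ : Fin D → ℝ)
    (f : (Fin D → ℝ) → ℝ)
    (C t : ℝ)
    (C' m ρ b : ℝ) (hC' : 1 ≤ C') (hm : 0 < m) (hρ0 : 0 < ρ)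
    (bk : ℕ → ℝ)
    (L : ℕ → ℝ)
    (hLtop : Tendsto L atTop atTop)
    (K : ℕ)
    (hmain : ∀ k, K ≤ k → ∀ x : Fin D → ℝ,
      bk k * L k / (1 - ρ) ≤ dist x x₀ →
      f x ≤ (C' * 3 ^ Nd) ^ (3 * ρ * dist x x₀ / L k) *
        Real.exp (-(3 * m * ρ * dist x x₀)) *
        (C * (1 + ‖x₀‖ + b * L (k + 1)) ^ t * L (k + 1) ^ Nd)) :
    ∀ ρ' : ℝ, 0 < ρ' → ρ' < 1 → ∃ R₀ : ℝ, ∀ x : Fin D → ℝ,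
      R₀ ≤ dist x x₀ → f x ≤ Real.exp (-(ρ * ρ' * m * dist x x₀)) := by
  intro ρ' _ hρ'1
  set c := C' * 3 ^ Nd
  have hc : 0 < c := by positivity
  obtain ⟨k, hkK, hLpos, hLc⟩ : ∃ k, K ≤ k ∧ 0 < L k ∧ 3 * log c / m ≤ L k :=
    ((eventually_ge_atTop K).and ((hLtop.eventually_gt_atTop 0).and
      (hLtop.eventually_ge_atTop _))).exists
  set A := C * (1 + ‖x₀‖ + b * L (k + 1)) ^ t * L (k + 1) ^ Nd
  refine ⟨max (bk k * L k / (1 - ρ)) (A / (m * ρ)), fun x hx => ?_⟩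
  set r := dist x x₀
  have hprefactor : c ^ (3 * ρ * r / L k) ≤ exp (m / 3 * (3 * ρ * r)) :=
    rpow_div_le_exp_mul_of_log_le hc hLpos (by positivity) (by
      rw [div_le_iff₀ hm] at hLc
      linarith)
  have hpoly : A ≤ exp (m * ρ * r) :=
    le_exp_mul_of_div_le (by positivity) (le_of_max_le_right hx)
  calc f x ≤ c ^ (3 * ρ * r / L k) * exp (-(3 * m * ρ * r)) * A :=
        hmain k hkK x (le_of_max_le_left hx)
    _ ≤ c ^ (3 * ρ * r / L k) * exp (-(3 * m * ρ * r)) * exp (m * ρ * r) := by gcongr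
    _ ≤ exp (m / 3 * (3 * ρ * r)) * exp (-(3 * m * ρ * r)) * exp (m * ρ * r) := by gcongr
    _ ≤ exp (-(ρ * ρ' * m * r)) := by
        rw [← exp_add, ← exp_add, exp_le_exp]
        nlinarith [mul_nonneg (mul_nonneg hm.le hρ0.le) (dist_nonneg : 0 ≤ r)]

/-- Converting the iterated multi-scale bound (with subexponential
prefactor and polynomial factors) into clean exponential decay: here `f x` stands for
`‖1_{C_1(x)} ψ‖` for a polynomially bounded generalized eigenfunction `ψ`. -/
theorem subexponential_to_exponential_decay
    (D Nd : ℕ) (x₀ : Fin D → ℝ)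
    (f : (Fin D → ℝ) → ℝ) (hf0 : ∀ x, 0 ≤ f x)
    (C t : ℝ) (hC : 0 < C) (ht : 0 < t)
    (hpoly : ∀ x, f x ≤ C * (1 + ‖x‖) ^ t)
    (C' m ρ b B : ℝ) (hC' : 1 ≤ C') (hm : 0 < m) (hρ0 : 0 < ρ) (hρ1 : ρ < 1)
    (hb : 0 < b) (hB : 0 < B)
    (bk : ℕ → ℝ) (hbk : ∀ k, 0 < bk k ∧ bk k ≤ B)
    (L : ℕ → ℝ) (hL1 : ∀ k, 1 ≤ L k)
    (hLtop : Tendsto L atTop atTop)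
    (hLgrow : ∀ k, L (k + 1) ≤ 2 * L k ^ ((3 : ℝ) / 2))
    (K : ℕ)
    (hmain : ∀ k, K ≤ k → ∀ x : Fin D → ℝ,
      bk k * L k / (1 - ρ) ≤ dist x x₀ →
      f x ≤ (C' * 3 ^ Nd) ^ (3 * ρ * dist x x₀ / L k) *
        Real.exp (-(3 * m * ρ * dist x x₀)) *
        (C * (1 + ‖x₀‖ + b * L (k + 1)) ^ t * L (k + 1) ^ Nd)) :
    ∀ ρ' : ℝ, 0 < ρ' → ρ' < 1 → ∃ R₀ : ℝ, ∀ x : Fin D → ℝ,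
      R₀ ≤ dist x x₀ → f x ≤ Real.exp (-(ρ * ρ' * m * dist x x₀)) :=
  subexponential_to_exponential_decay_general D Nd x₀ f C t C' m ρ b hC' hm hρ0 bk L hLtop K hmain
end
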